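/- The partition function of the Villain model is nondecreasing in the conductances: let d ≥ 2, let Λ ⊆ ℤ^d be finite, let E(Λ) be the set of unordered pairs {x,y} ⊆ Λ with |x−y|₁ = 1, and for J ∈ (0,∞)^{E(Λ)} set Z^{Vil}_{Λ,J} := ∫_{[0,2π)^Λ} ∏_{{x,y}∈E(Λ)} v_{J_{xy}}(θ_x − θ_y) ∏_{x∈Λ} dθ_x. If J, J′ ∈ (0,∞)^{E(Λ)} satisfy J_{xy} ≤ J′_{xy} for every edge {x,y}, then Z^{Vil}_{Λ,J} ≤ Z^{Vil}_{Λ,J′}. -/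

import Mathlib

open MeasureTheory Real

noncomputable section

/-- Vertices of `ℤ^d`. -/
abbrev Vertex (d : ℕ) := Fin d → ℤ

/-- The box `Λ_L = {-L, …, L}^d ⊆ ℤ^d`. -/
def box (d L : ℕ) : Finset (Vertex d) :=
  Fintype.piFinset fun _ : Fin d => Finset.Icc (-(L : ℤ)) (L : ℤ)

/-- The set `E(Λ)` of nearest-neighbour edges with both endpoints in `Λ`; each
unordered edge `{x, x + eᵢ}` is recorded exactly once, as the ordered pair
`(x, x + eᵢ)` (i.e. with the coordinatewise-smaller endpoint first). -/
def edges (d : ℕ) (Λ : Finset (Vertex d)) : Finset (Vertex d × Vertex d) :=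
  (Λ ×ˢ Λ).filter fun p => (∑ i, |p.2 i - p.1 i|) = 1 ∧ ∀ i, p.1 i ≤ p.2 i

/-- Euclidean norm of a lattice point. -/
def euclNorm {d : ℕ} (x : Vertex d) : ℝ := Real.sqrt (∑ i, ((x i : ℝ)) ^ 2)

/-- Sup norm of a lattice point. -/
def supNorm {d : ℕ} (x : Vertex d) : ℕ := Finset.univ.sup fun i => (x i).natAbs

/-- The Villain kernel `v_β`, with the convention `v_0 ≡ 1`. -/
def villainKer (β θ : ℝ) : ℝ :=
  if β = 0 then 1
  else Real.sqrt (2 * π * β) * ∑' k : ℤ, Real.exp (-(β / 2) * (θ - 2 * π * (k : ℝ)) ^ 2)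

/-- Lebesgue measure on `[0, 2π)^ι`. -/
def angleMeasure (ι : Type*) [Fintype ι] : Measure (ι → ℝ) :=
  volume.restrict (Set.univ.pi fun _ => Set.Ico (0 : ℝ) (2 * π))

/-- Extension of a function on (the coercion to a type of) a finset `Λ` to a
function on all of `V`, by zero. -/
def extFun {V : Type*} [DecidableEq V] {α : Type*} [Zero α] (Λ : Finset V) (θ : ↑Λ → α) :
    V → α :=
  fun x => if h : x ∈ Λ then θ ⟨x, h⟩ else 0

/-- The expectation of an observable `f` under the spin system on `Λ ⊆ ℤ^d` whose
density with respect to the product Lebesgue measure on `[0,2π)^Λ` is proportional to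
`∏_{{x,y} ∈ E(Λ)} w_{xy}(θ_x − θ_y)`. -/
def spinExp (d : ℕ) (Λ : Finset (Vertex d)) (w : ↑(edges d Λ) → ℝ → ℝ)
    (f : (Vertex d → ℝ) → ℝ) : ℝ :=
  (∫ θ : ↑Λ → ℝ,
      f (extFun Λ θ) * ∏ e : ↑(edges d Λ), w e (extFun Λ θ e.1.1 - extFun Λ θ e.1.2)
      ∂(angleMeasure ↑Λ)) /
  (∫ θ : ↑Λ → ℝ,
      ∏ e : ↑(edges d Λ), w e (extFun Λ θ e.1.1 - extFun Λ θ e.1.2)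
      ∂(angleMeasure ↑Λ))

/-- Expectation with respect to i.i.d. Bernoulli(p) `{0,1}`-valued random variables
indexed by a finite type `α`. -/
def bernoulliSum {α : Type*} [Fintype α] [DecidableEq α] (p : ℝ) (f : (α → Bool) → ℝ) : ℝ :=
  ∑ ω : α → Bool, (∏ a : α, if ω a then p else 1 - p) * f ω

/-- The two-point observable `cos(θ_0 − θ_x)`. -/
def twoPointObs {d : ℕ} (x : Vertex d) : (Vertex d → ℝ) → ℝ :=
  fun θ => Real.cos (θ 0 - θ x)


/-- The partition function `Z^{Vil}_{Λ,J}` of the Villain model on a finite set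
`Λ ⊆ ℤ^d` with conductances `J` on `E(Λ)`. -/
def villainZ (d : ℕ) (Λ : Finset (Vertex d)) (J : ↑(edges d Λ) → ℝ) : ℝ :=
  ∫ θ : ↑Λ → ℝ,
    ∏ e : ↑(edges d Λ), villainKer (J e) (extFun Λ θ e.1.1 - extFun Λ θ e.1.2)
    ∂(angleMeasure ↑Λ)


/-! ### Auxiliary material for the proof -/

section VillainAux

open Complex
open scoped ENNReal

/-- Fourier coefficients of the Villain kernel. -/
def vc (β : ℝ) (k : ℤ) : ℝ := rexp (-(k : ℝ) ^ 2 / (2 * β))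

/-- The phase `e^{it}`. -/
def ph (t : ℝ) : ℂ := Complex.exp ((t : ℂ) * Complex.I)

lemma vc_pos (β : ℝ) (k : ℤ) : 0 < vc β k := Real.exp_pos _

lemma vc_neg (β : ℝ) (k : ℤ) : vc β (-k) = vc β k := by simp [vc]

lemma vc_mono {β β' : ℝ} (hβ : 0 < β) (hle : β ≤ β') (k : ℤ) : vc β k ≤ vc β' k := by
  apply Real.exp_le_exp.2
  rw [neg_div, neg_div, neg_le_neg_iff]
  gcongr

lemma norm_vc_ph (β : ℝ) (k : ℤ) (t : ℝ) : ‖(vc β k : ℂ) * ph t‖ = vc β k := by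
  rw [norm_mul, ph]
  simp only [Complex.norm_exp_ofReal_mul_I, mul_one, Complex.norm_real, Real.norm_eq_abs]
  exact abs_of_pos (vc_pos β k)

lemma summable_exp_neg_sq {c : ℝ} (hc : 0 < c) :
    Summable fun k : ℤ => rexp (-c * (k : ℝ) ^ 2) := by
  have key : ∀ f : ℕ → ℝ, (∀ n : ℕ, f n = rexp (-c * (n : ℝ) ^ 2)) → Summable f := by
    intro f hf
    have hg : Summable fun n : ℕ => rexp (-c) ^ n :=
      summable_geometric_of_lt_one (Real.exp_pos _).le
        (Real.exp_lt_one_iff.2 (by linarith))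
    refine hg.of_nonneg_of_le (fun n => ?_) (fun n => ?_)
    · rw [hf]; positivity
    · rw [hf, ← Real.exp_nat_mul]
      apply Real.exp_le_exp.2
      have h1 : (n : ℝ) ≤ (n : ℝ) ^ 2 := by
        exact_mod_cast Nat.le_self_pow two_ne_zero n
      nlinarith
  refine Summable.of_nat_of_neg (key _ fun n => by push_cast; ring_nf) (key _ fun n => ?_)
  push_cast; ring_nf

lemma summable_vc {β : ℝ} (hβ : 0 < β) : Summable (vc β) := by
  refine (summable_exp_neg_sq (c := 1 / (2 * β)) (by positivity)).congr fun k => ?_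
  rw [vc]
  congr 1
  field_simp

lemma villainKer_eq {β : ℝ} (hβ : 0 < β) (θ : ℝ) :
    (villainKer β θ : ℂ) = ∑' k : ℤ, (vc β k : ℂ) * ph ((k : ℝ) * θ) := by
  have hπ := Real.pi_pos
  have ha : (0:ℝ) < 2 * π * β := by positivity
  have key := Complex.tsum_exp_neg_quadratic (a := ((2 * π * β : ℝ) : ℂ))
    (by simpa using ha) ((β * θ : ℝ) : ℂ)
  have hsq : ((2 * π * β : ℝ) : ℂ) ^ (1 / 2 : ℂ) = (Real.sqrt (2 * π * β) : ℂ) := by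
    rw [Real.sqrt_eq_rpow, Complex.ofReal_cpow ha.le]
    norm_num
  have hL : (∑' n : ℤ, cexp (-(π:ℂ) * ((2 * π * β : ℝ) : ℂ) * (n:ℂ) ^ 2
        + 2 * (π:ℂ) * ((β * θ : ℝ) : ℂ) * (n:ℂ))) =
      cexp ((β * θ ^ 2 / 2 : ℝ) : ℂ) *
        ∑' k : ℤ, ((rexp (-(β / 2) * (θ - 2 * π * (k : ℝ)) ^ 2) : ℝ) : ℂ) := by
    rw [← tsum_mul_left]
    congr 1
    ext n
    rw [Complex.ofReal_exp, ← Complex.exp_add]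
    congr 1
    push_cast
    ring
  have hR : ∀ n : ℤ, cexp (-(π:ℂ) / ((2 * π * β : ℝ) : ℂ)
        * ((n:ℂ) + Complex.I * ((β * θ : ℝ) : ℂ)) ^ 2)
      = cexp ((β * θ ^ 2 / 2 : ℝ) : ℂ) * ((vc β n : ℂ) * ph (-((n : ℝ) * θ))) := by
    intro n
    rw [vc, ph, Complex.ofReal_exp, mul_assoc, ← Complex.exp_add, ← Complex.exp_add]
    congr 1
    have hb : ((2 * π * β : ℝ) : ℂ) ≠ 0 := by exact_mod_cast ha.ne'
    have hβ' : (β : ℂ) ≠ 0 := by exact_mod_cast hβ.ne'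
    have hπ' : (π : ℂ) ≠ 0 := by exact_mod_cast hπ.ne'
    push_cast
    field_simp
    ring_nf
    rw [Complex.I_sq]
    ring
  rw [hL, hsq] at key
  simp only [hR] at key
  rw [tsum_mul_left] at key
  have hc0 : cexp ((β * θ ^ 2 / 2 : ℝ) : ℂ) ≠ 0 := Complex.exp_ne_zero _
  have hS : (∑' k : ℤ, ((rexp (-(β / 2) * (θ - 2 * π * (k : ℝ)) ^ 2) : ℝ) : ℂ)) =
      (Real.sqrt (2 * π * β) : ℂ)⁻¹ * ∑' k : ℤ, (vc β k : ℂ) * ph (-((k : ℝ) * θ)) := by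
    apply mul_left_cancel₀ hc0
    rw [key]
    ring
  have hsqpos : (0:ℝ) < Real.sqrt (2 * π * β) := Real.sqrt_pos.2 ha
  have hsqne : ((Real.sqrt (2 * π * β) : ℝ) : ℂ) ≠ 0 := by exact_mod_cast hsqpos.ne'
  have hT : (∑' k : ℤ, (vc β k : ℂ) * ph (-((k : ℝ) * θ)))
      = ∑' k : ℤ, (vc β k : ℂ) * ph ((k : ℝ) * θ) := by
    rw [← (Equiv.neg ℤ).tsum_eq (fun k : ℤ => (vc β k : ℂ) * ph ((k : ℝ) * θ))]
    congr 1
    ext k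
    simp only [Equiv.neg_apply, vc_neg]
    norm_num
  rw [villainKer, if_neg hβ.ne', Complex.ofReal_mul, Complex.ofReal_tsum, hS, hT, ← mul_assoc,
    mul_inv_cancel₀ hsqne, one_mul]

lemma summable_pi_prod_fin : ∀ (n : ℕ) (g : Fin n → ℤ → ℝ), (∀ i, Summable (g i)) →
    (∀ i k, 0 ≤ g i k) → Summable fun m : Fin n → ℤ => ∏ i, g i (m i) := by
  intro n
  induction n with
  | zero =>
    intro g _ _
    haveI : Unique (Fin 0 → ℤ) := ⟨⟨fun i => i.elim0⟩, fun f => funext fun i => i.elim0⟩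
    exact Summable.of_finite
  | succ n ih =>
    intro g hg h0
    have hG : Summable fun m : Fin n → ℤ => ∏ i, g i.succ (m i) :=
      ih (fun i => g i.succ) (fun i => hg _) (fun i k => h0 _ _)
    have hprod : Summable fun p : ℤ × (Fin n → ℤ) => g 0 p.1 * ∏ i, g i.succ (p.2 i) := by
      apply Summable.mul_of_nonneg (hg 0) hG
      · exact Pi.le_def.mpr fun k => h0 0 k
      · exact Pi.le_def.mpr fun m => Finset.prod_nonneg fun i _ => h0 _ _
    have h2 := (((Fin.consEquiv fun _ : Fin (n+1) => ℤ).symm).summable_iff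
      (f := fun p : ℤ × (Fin n → ℤ) => g 0 p.1 * ∏ i, g i.succ (p.2 i))).2 hprod
    refine h2.congr fun m => ?_
    simp [Fin.consEquiv, Fin.prod_univ_succ]
    exact Or.inl rfl

lemma summable_pi_prod {ι : Type*} [Fintype ι] (g : ι → ℤ → ℝ) (hg : ∀ i, Summable (g i))
    (h0 : ∀ i k, 0 ≤ g i k) : Summable fun m : ι → ℤ => ∏ i, g i (m i) := by
  classical
  let e := Fintype.equivFin ι
  have hfin := summable_pi_prod_fin (Fintype.card ι) (fun j => g (e.symm j))
    (fun j => hg _) (fun j k => h0 _ _)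
  have h2 := ((Equiv.arrowCongr e (Equiv.refl ℤ)).summable_iff
    (f := fun m : Fin (Fintype.card ι) → ℤ => ∏ j, g (e.symm j) (m j))).2 hfin
  refine h2.congr fun m => ?_
  exact Fintype.prod_equiv e.symm _ _ fun j => rfl

lemma tsum_pi_prod_fin : ∀ (n : ℕ) (f : Fin n → ℤ → ℂ), (∀ i, Summable fun k => ‖f i k‖) →
    (∏ i, ∑' k, f i k) = ∑' m : Fin n → ℤ, ∏ i, f i (m i) := by
  intro n
  induction n with
  | zero =>
    intro f _
    haveI : Unique (Fin 0 → ℤ) := ⟨⟨fun i => i.elim0⟩, fun f => funext fun i => i.elim0⟩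
    simp [tsum_eq_single (default : Fin 0 → ℤ)
      (fun m hm => absurd (Subsingleton.elim m default) hm)]
  | succ n ih =>
    intro f hf
    have hnorm : Summable fun m : Fin n → ℤ => ‖∏ i, f i.succ (m i)‖ := by
      have := summable_pi_prod_fin n (fun i k => ‖f i.succ k‖) (fun i => hf _)
        (fun i k => norm_nonneg _)
      exact this.congr fun m => by rw [norm_prod]
    calc ∏ i, ∑' k, f i k
        = (∑' k, f 0 k) * ∏ i : Fin n, ∑' k, f i.succ k := Fin.prod_univ_succ _
      _ = (∑' k, f 0 k) * ∑' m : Fin n → ℤ, ∏ i, f i.succ (m i) := by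
          rw [ih _ fun i => hf _]
      _ = ∑' p : ℤ × (Fin n → ℤ), f 0 p.1 * ∏ i, f i.succ (p.2 i) :=
          tsum_mul_tsum_of_summable_norm (hf 0) hnorm
      _ = ∑' m : Fin (n+1) → ℤ, ∏ i, f i (m i) := by
          rw [← (((Fin.consEquiv fun _ : Fin (n+1) => ℤ).symm).symm.tsum_eq (fun m : Fin (n+1) → ℤ => ∏ i, f i (m i)))]
          congr 1
          ext p
          simp [Fin.consEquiv, Fin.prod_univ_succ]

lemma tsum_pi_prod {ι : Type*} [Fintype ι] (f : ι → ℤ → ℂ)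
    (hf : ∀ i, Summable fun k => ‖f i k‖) :
    (∏ i, ∑' k, f i k) = ∑' m : ι → ℤ, ∏ i, f i (m i) := by
  classical
  let e := Fintype.equivFin ι
  have hfin := tsum_pi_prod_fin (Fintype.card ι) (fun j => f (e.symm j)) (fun j => hf _)
  calc ∏ i, ∑' k, f i k = ∏ j, ∑' k, f (e.symm j) k :=
        Fintype.prod_equiv e _ _ fun i => by simp
    _ = ∑' m : Fin (Fintype.card ι) → ℤ, ∏ j, f (e.symm j) (m j) := hfin
    _ = ∑' m : ι → ℤ, ∏ i, f i (m i) := by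
        rw [← ((Equiv.arrowCongr e (Equiv.refl ℤ)).tsum_eq
          (fun m : Fin (Fintype.card ι) → ℤ => ∏ j, f (e.symm j) (m j)))]
        congr 1
        ext m
        exact Fintype.prod_equiv e.symm _ _ fun j => rfl

lemma integral_angle_prod {ι : Type*} [Fintype ι] (g : ι → ℝ → ℂ) :
    ∫ x : ι → ℝ, ∏ i, g i (x i) ∂(angleMeasure ι) =
      ∏ i, ∫ t in Set.Ico (0:ℝ) (2*π), g i t := by
  rw [angleMeasure, ← integral_indicator (MeasurableSet.univ_pi fun _ => measurableSet_Ico)]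
  have hind : (Set.indicator (Set.univ.pi fun _ : ι => Set.Ico (0:ℝ) (2*π))
      (fun x : ι → ℝ => ∏ i, g i (x i))) =
      fun x => ∏ i, Set.indicator (Set.Ico (0:ℝ) (2*π)) (g i) (x i) := by
    funext x
    by_cases hx : x ∈ Set.univ.pi fun _ : ι => Set.Ico (0:ℝ) (2*π)
    · rw [Set.indicator_of_mem hx]
      refine Finset.prod_congr rfl fun i _ => ?_
      rw [Set.indicator_of_mem (hx i (Set.mem_univ i))]
    · rw [Set.indicator_of_notMem hx]
      rw [Set.mem_univ_pi] at hx
      push_neg at hx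
      obtain ⟨i, hi⟩ := hx
      exact (Finset.prod_eq_zero (Finset.mem_univ i)
        (Set.indicator_of_notMem hi _)).symm
  rw [hind, MeasureTheory.integral_fintype_prod_volume_eq_prod
    (f := fun i => Set.indicator (Set.Ico (0:ℝ) (2*π)) (g i))]
  exact Finset.prod_congr rfl fun i _ => integral_indicator measurableSet_Ico

lemma integral_ph_Ico (n : ℤ) :
    ∫ t in Set.Ico (0:ℝ) (2*π), ph ((n : ℝ) * t) =
      if n = 0 then ((2 * π : ℝ) : ℂ) else 0 := by
  have h2π : (0:ℝ) ≤ 2 * π := by positivity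
  rw [MeasureTheory.integral_Ico_eq_integral_Ioo, ← MeasureTheory.integral_Ioc_eq_integral_Ioo,
    ← intervalIntegral.integral_of_le h2π]
  by_cases hn : n = 0
  · subst hn
    simp [ph, intervalIntegral.integral_const]
  · rw [if_neg hn]
    have hc : ((n:ℂ) * Complex.I) ≠ 0 := by
      simp [Complex.I_ne_zero, hn]
    have heq : ∀ t : ℝ, ph ((n : ℝ) * t) = Complex.exp (((n:ℂ) * Complex.I) * (t:ℂ)) := by
      intro t
      rw [ph]
      push_cast
      ring_nf
    simp_rw [heq]
    rw [integral_exp_mul_complex hc]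
    have h1 : Complex.exp ((n:ℂ) * Complex.I * ((2*π : ℝ):ℂ)) = 1 := by
      have := Complex.exp_int_mul_two_pi_mul_I n
      rw [← this]
      congr 1
      push_cast
      ring
    rw [h1]
    simp

lemma prod_ph_sum {α : Type*} [Fintype α] (t : α → ℝ) :
    ∏ a, ph (t a) = ph (∑ a, t a) := by
  rw [ph, Complex.ofReal_sum, Finset.sum_mul, Complex.exp_sum]
  rfl

variable {d : ℕ} {Λ : Finset (Vertex d)}

lemma edge_fst_mem (e : ↑(edges d Λ)) : (e : Vertex d × Vertex d).1 ∈ Λ := by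
  have h := e.2
  simp only [edges, Finset.mem_filter, Finset.mem_product] at h
  exact h.1.1

lemma edge_snd_mem (e : ↑(edges d Λ)) : (e : Vertex d × Vertex d).2 ∈ Λ := by
  have h := e.2
  simp only [edges, Finset.mem_filter, Finset.mem_product] at h
  exact h.1.2

/-- The difference of angles across an edge. -/
def eDiff (Λ : Finset (Vertex d)) (e : ↑(edges d Λ)) (θ : ↑Λ → ℝ) : ℝ :=
  extFun Λ θ (e : Vertex d × Vertex d).1 - extFun Λ θ (e : Vertex d × Vertex d).2

/-- The divergence of an integer-valued flow on the edges. -/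
def divg (m : ↑(edges d Λ) → ℤ) (x : ↑Λ) : ℤ :=
  ∑ e : ↑(edges d Λ), m e *
    ((if (e : Vertex d × Vertex d).1 = ↑x then 1 else 0) -
     (if (e : Vertex d × Vertex d).2 = ↑x then 1 else 0))

/-- The (J-independent) weight of a flow. -/
def wgt (m : ↑(edges d Λ) → ℤ) : ℝ :=
  ∏ x : ↑Λ, if divg m x = 0 then 2*π else 0

lemma wgt_nonneg (m : ↑(edges d Λ) → ℤ) : 0 ≤ wgt m :=
  Finset.prod_nonneg fun x _ => by
    split_ifs
    · positivity
    · exact le_refl _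

lemma wgt_le (m : ↑(edges d Λ) → ℤ) : wgt m ≤ (2*π) ^ Fintype.card ↑Λ := by
  rw [wgt, ← Finset.card_univ, ← Finset.prod_const]
  refine Finset.prod_le_prod (fun x _ => ?_) (fun x _ => ?_)
  · split_ifs
    · positivity
    · exact le_refl _
  · split_ifs
    · exact le_refl _
    · positivity

lemma sum_single (θ : ↑Λ → ℝ) {v : Vertex d} (hv : v ∈ Λ) :
    ∑ x : ↑Λ, (if v = ↑x then (1:ℝ) else 0) * θ x = extFun Λ θ v := by
  have h1 : ∀ x : ↑Λ, (if v = ↑x then (1:ℝ) else 0) * θ x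
      = if (⟨v, hv⟩ : ↑Λ) = x then θ x else 0 := by
    intro x
    by_cases h : v = ↑x
    · rw [if_pos h, if_pos (Subtype.ext h), one_mul]
    · rw [if_neg h, if_neg (fun hh => h (congrArg Subtype.val hh)), zero_mul]
  simp_rw [h1]
  rw [Finset.sum_ite_eq, if_pos (Finset.mem_univ _), extFun, dif_pos hv]

lemma divg_cast (m : ↑(edges d Λ) → ℤ) (x : ↑Λ) :
    ((divg m x : ℤ) : ℝ) = ∑ e : ↑(edges d Λ), (m e : ℝ) *
      ((if (e : Vertex d × Vertex d).1 = ↑x then (1:ℝ) else 0) -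
       (if (e : Vertex d × Vertex d).2 = ↑x then (1:ℝ) else 0)) := by
  rw [divg]
  push_cast [apply_ite (Int.cast : ℤ → ℝ)]
  rfl

lemma sum_edge_eq (m : ↑(edges d Λ) → ℤ) (θ : ↑Λ → ℝ) :
    ∑ e : ↑(edges d Λ), (m e : ℝ) * eDiff Λ e θ = ∑ x : ↑Λ, (divg m x : ℝ) * θ x := by
  have h1 : ∀ e : ↑(edges d Λ), (m e : ℝ) * eDiff Λ e θ =
      ∑ x : ↑Λ, (m e : ℝ) * (((if (e : Vertex d × Vertex d).1 = ↑x then (1:ℝ) else 0) -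
        (if (e : Vertex d × Vertex d).2 = ↑x then (1:ℝ) else 0)) * θ x) := by
    intro e
    rw [← Finset.mul_sum]
    congr 1
    rw [eDiff]
    simp_rw [sub_mul, Finset.sum_sub_distrib]
    rw [sum_single θ (edge_fst_mem e), sum_single θ (edge_snd_mem e)]
  simp_rw [h1]
  rw [Finset.sum_comm]
  refine Finset.sum_congr rfl fun x _ => ?_
  rw [divg_cast, Finset.sum_mul]
  refine Finset.sum_congr rfl fun e _ => ?_
  ring

lemma continuous_extFun (v : Vertex d) :
    Continuous fun θ : ↑Λ → ℝ => extFun Λ θ v := by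
  by_cases h : v ∈ Λ
  · simp only [extFun, dif_pos h]
    exact continuous_apply _
  · simp only [extFun, dif_neg h]
    exact continuous_const

/-- The summand attached to an integer flow `m`. -/
def Fm (Λ : Finset (Vertex d)) (J : ↑(edges d Λ) → ℝ) (m : ↑(edges d Λ) → ℤ)
    (θ : ↑Λ → ℝ) : ℂ :=
  ∏ e : ↑(edges d Λ), ((vc (J e) (m e) : ℂ) * ph ((m e : ℝ) * eDiff Λ e θ))

lemma norm_Fm (J : ↑(edges d Λ) → ℝ) (m : ↑(edges d Λ) → ℤ) (θ : ↑Λ → ℝ) :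
    ‖Fm Λ J m θ‖ = ∏ e, vc (J e) (m e) := by
  rw [Fm, norm_prod]
  exact Finset.prod_congr rfl fun e _ => norm_vc_ph _ _ _

lemma continuous_Fm (J : ↑(edges d Λ) → ℝ) (m : ↑(edges d Λ) → ℤ) :
    Continuous (Fm Λ J m) := by
  apply continuous_finset_prod
  intro e _
  apply Continuous.mul continuous_const
  apply Complex.continuous_exp.comp
  apply Continuous.mul _ continuous_const
  apply Complex.continuous_ofReal.comp
  apply Continuous.mul continuous_const
  exact (continuous_extFun _).sub (continuous_extFun _)

lemma angleMeasure_univ :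
    angleMeasure ↑Λ Set.univ = (ENNReal.ofReal (2*π)) ^ (Fintype.card ↑Λ) := by
  rw [angleMeasure, Measure.restrict_apply_univ, volume_pi_pi]
  simp [Real.volume_Ico]

lemma villainZ_eq (J : ↑(edges d Λ) → ℝ) (hJ : ∀ e, 0 < J e) :
    villainZ d Λ J = ∑' m : ↑(edges d Λ) → ℤ, (∏ e, vc (J e) (m e)) * wgt m := by
  have hA : Summable (fun m : ↑(edges d Λ) → ℤ => ∏ e, vc (J e) (m e)) :=
    summable_pi_prod _ (fun e => summable_vc (hJ e)) (fun e k => (vc_pos _ _).le)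
  have hpoint : ∀ θ : ↑Λ → ℝ,
      ((∏ e : ↑(edges d Λ), villainKer (J e) (eDiff Λ e θ) : ℝ) : ℂ) = ∑' m, Fm Λ J m θ := by
    intro θ
    rw [Complex.ofReal_prod]
    have h1 : ∀ e : ↑(edges d Λ), ((villainKer (J e) (eDiff Λ e θ) : ℝ) : ℂ)
        = ∑' k : ℤ, (vc (J e) k : ℂ) * ph ((k : ℝ) * eDiff Λ e θ) :=
      fun e => villainKer_eq (hJ e) _
    simp_rw [h1]
    exact tsum_pi_prod (fun e k => (vc (J e) k : ℂ) * ph ((k : ℝ) * eDiff Λ e θ))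
      (fun e => (summable_vc (hJ e)).congr fun k => (norm_vc_ph _ _ _).symm)
  have hFm_int : ∀ m, ∫ θ, Fm Λ J m θ ∂(angleMeasure ↑Λ)
      = (((∏ e, vc (J e) (m e)) * wgt m : ℝ) : ℂ) := by
    intro m
    have h1 : ∀ θ, Fm Λ J m θ = (∏ e, (vc (J e) (m e) : ℂ)) *
        ∏ x : ↑Λ, ph ((divg m x : ℝ) * θ x) := by
      intro θ
      rw [Fm, Finset.prod_mul_distrib]
      congr 1
      rw [prod_ph_sum, prod_ph_sum]
      congr 1
      exact sum_edge_eq m θ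
    simp_rw [h1]
    rw [MeasureTheory.integral_const_mul,
      integral_angle_prod (fun x t => ph ((divg m x : ℝ) * t))]
    simp_rw [integral_ph_Ico]
    rw [wgt]
    push_cast [apply_ite (Complex.ofReal : ℝ → ℂ)]
    norm_num
  have hmeas : ∀ m : ↑(edges d Λ) → ℤ, AEStronglyMeasurable (Fm Λ J m) (angleMeasure ↑Λ) :=
    fun m => (continuous_Fm J m).aestronglyMeasurable
  have hlint : (∑' m : ↑(edges d Λ) → ℤ,
      ∫⁻ θ, (‖Fm Λ J m θ‖₊ : ℝ≥0∞) ∂(angleMeasure ↑Λ)) ≠ ⊤ := by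
    have hn : ∀ m (θ : ↑Λ → ℝ), (‖Fm Λ J m θ‖₊ : ℝ≥0∞)
        = ENNReal.ofReal (∏ e, vc (J e) (m e)) := by
      intro m θ
      rw [← ENNReal.ofReal_coe_nnreal, coe_nnnorm, norm_Fm]
    calc ∑' m : ↑(edges d Λ) → ℤ, ∫⁻ θ, (‖Fm Λ J m θ‖₊ : ℝ≥0∞) ∂(angleMeasure ↑Λ)
        = ∑' m : ↑(edges d Λ) → ℤ, ENNReal.ofReal (∏ e, vc (J e) (m e))
            * angleMeasure ↑Λ Set.univ := by
          refine tsum_congr fun m => ?_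
          simp_rw [hn m]
          rw [MeasureTheory.lintegral_const]
      _ = ENNReal.ofReal (∑' m : ↑(edges d Λ) → ℤ, ∏ e, vc (J e) (m e))
            * angleMeasure ↑Λ Set.univ := by
          rw [ENNReal.tsum_mul_right, ENNReal.ofReal_tsum_of_nonneg
            (fun m => Finset.prod_nonneg fun e _ => (vc_pos _ _).le) hA]
      _ ≠ ⊤ := by
          apply ENNReal.mul_ne_top ENNReal.ofReal_ne_top
          rw [angleMeasure_univ]
          exact ENNReal.pow_ne_top ENNReal.ofReal_ne_top
  have key : ((villainZ d Λ J : ℝ) : ℂ)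
      = ((∑' m : ↑(edges d Λ) → ℤ, (∏ e, vc (J e) (m e)) * wgt m : ℝ) : ℂ) := by
    calc ((villainZ d Λ J : ℝ) : ℂ)
        = ∫ θ, ((∏ e : ↑(edges d Λ), villainKer (J e) (eDiff Λ e θ) : ℝ) : ℂ)
            ∂(angleMeasure ↑Λ) := by
          rw [villainZ]
          exact (integral_ofReal (𝕜 := ℂ)).symm
      _ = ∫ θ, ∑' m : ↑(edges d Λ) → ℤ, Fm Λ J m θ ∂(angleMeasure ↑Λ) :=
          integral_congr_ae (Filter.Eventually.of_forall fun θ => hpoint θ)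
      _ = ∑' m : ↑(edges d Λ) → ℤ, ∫ θ, Fm Λ J m θ ∂(angleMeasure ↑Λ) :=
          MeasureTheory.integral_tsum hmeas hlint
      _ = ∑' m : ↑(edges d Λ) → ℤ, (((∏ e, vc (J e) (m e)) * wgt m : ℝ) : ℂ) :=
          tsum_congr hFm_int
      _ = ((∑' m : ↑(edges d Λ) → ℤ, (∏ e, vc (J e) (m e)) * wgt m : ℝ) : ℂ) :=
          (Complex.ofReal_tsum _).symm
  exact_mod_cast key

lemma summable_A_wgt (J : ↑(edges d Λ) → ℝ) (hJ : ∀ e, 0 < J e) :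
    Summable fun m : ↑(edges d Λ) → ℤ => (∏ e, vc (J e) (m e)) * wgt m := by
  have hA : Summable (fun m : ↑(edges d Λ) → ℤ => ∏ e, vc (J e) (m e)) :=
    summable_pi_prod _ (fun e => summable_vc (hJ e)) (fun e k => (vc_pos _ _).le)
  refine (hA.mul_right ((2*π) ^ Fintype.card ↑Λ)).of_nonneg_of_le
    (fun m => mul_nonneg (Finset.prod_nonneg fun e _ => (vc_pos _ _).le) (wgt_nonneg m))
    (fun m => ?_)
  exact mul_le_mul_of_nonneg_left (wgt_le m)
    (Finset.prod_nonneg fun e _ => (vc_pos _ _).le)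

end VillainAux

/-- **Theorem (Statement 18).** The partition function of the Villain model is
nondecreasing in the conductances. -/
theorem villain_partition_function_monotone (d : ℕ) (hd : 2 ≤ d)
    (Λ : Finset (Vertex d)) (J J' : ↑(edges d Λ) → ℝ)
    (hJ : ∀ e, 0 < J e) (hJ' : ∀ e, 0 < J' e) (hle : ∀ e, J e ≤ J' e) :
    villainZ d Λ J ≤ villainZ d Λ J' := by
  rw [villainZ_eq J hJ, villainZ_eq J' hJ']
  refine Summable.tsum_le_tsum (fun m => ?_) (summable_A_wgt J hJ) (summable_A_wgt J' hJ')
  refine mul_le_mul_of_nonneg_right ?_ (wgt_nonneg m)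
  exact Finset.prod_le_prod (fun e _ => (vc_pos _ _).le)
    (fun e _ => vc_mono (hJ e) (hle e) (m e))

end
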